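/- arXiv:1702.04768 — 4 statements merged into one kernel-verified Lean document; each statement's English description precedes it below -/
import Mathlib

section
/- Let r ≥ 1, let J denote the standard 2r×2r symplectic form matrix J = fromBlocks 0 I (−I) 0 over ℝ, let M : ℝ → Matrix (Fin r) (Fin r) ℝ satisfy (M t)ᵀ = M t for all t, and set A t = fromBlocks 0 I (−M t) 0. If Φ : ℝ → Matrix (Fin (2r)) (Fin (2r)) ℝ satisfies Φ 0 = 1 and, entrywise, Φ has derivative (A t) * (Φ t) at every t ∈ ℝ, then for all t ∈ ℝ the fundamental matrix is symplectic: (Φ t)ᵀ * J * (Φ t) = J. -/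
open Matrix

/-! Because `M t` is symmetric, `A t` is Hamiltonian: `Aᵀ J + J A = 0`. Hence the derivative
`(AΦ)ᵀ J Φ + Φᵀ J (AΦ) = Φᵀ (Aᵀ J + J A) Φ` of `Φᵀ J Φ` vanishes, so `Φᵀ J Φ` is constant, equal to
its value `J` at `t = 0`. -/

section ProductRule

variable {𝕜 : Type*} [NontriviallyNormedField 𝕜] {l m n : Type*} [Fintype m] {t : 𝕜}

theorem Matrix.hasDerivAt_mul_apply {X : 𝕜 → Matrix l m 𝕜} {Y : 𝕜 → Matrix m n 𝕜}
    {X' : Matrix l m 𝕜} {Y' : Matrix m n 𝕜}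
    (hX : ∀ i j, HasDerivAt (fun s => X s i j) (X' i j) t)
    (hY : ∀ i j, HasDerivAt (fun s => Y s i j) (Y' i j) t) (i : l) (j : n) :
    HasDerivAt (fun s => (X s * Y s) i j) ((X' * Y t + X t * Y') i j) t := by
  simp only [add_apply, mul_apply, ← Finset.sum_add_distrib]
  exact HasDerivAt.fun_sum fun k _ => (hX i k).mul (hY k j)

theorem Matrix.hasDerivAt_transpose_mul_mul_apply {X : 𝕜 → Matrix m n 𝕜} {X' : Matrix m n 𝕜}
    (J : Matrix m m 𝕜) (hX : ∀ i j, HasDerivAt (fun s => X s i j) (X' i j) t) (i j : n) :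
    HasDerivAt (fun s => ((X s)ᵀ * J * X s) i j) ((X'ᵀ * J * X t + (X t)ᵀ * J * X') i j) t := by
  have hXJ := hasDerivAt_mul_apply (X := fun s => (X s)ᵀ) (X' := X'ᵀ) (Y := fun _ => J) (Y' := 0)
    (fun i j => hX j i) (fun _ _ => hasDerivAt_const t _)
  simpa only [Matrix.mul_zero, add_zero] using hasDerivAt_mul_apply hXJ hX i j

end ProductRule

theorem Matrix.transpose_mul_add_mul_eq_zero_of_isSymm {R : Type*} [CommRing R] {r : Type*}
    [Fintype r] [DecidableEq r] {M : Matrix r r R} (hM : Mᵀ = M) :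
    (fromBlocks 0 1 (-M) 0)ᵀ * fromBlocks 0 1 (-1) 0 + fromBlocks 0 1 (-1) 0 * fromBlocks 0 1 (-M) 0
      = (0 : Matrix (r ⊕ r) (r ⊕ r) R) := by
  simp [fromBlocks_transpose, fromBlocks_multiply, fromBlocks_add, hM]

theorem Matrix.transpose_mul_mul_eq_of_hasDerivAt {𝕜 : Type*} [RCLike 𝕜] {ι : Type*} [Fintype ι]
    (J : Matrix ι ι 𝕜) {A Φ : 𝕜 → Matrix ι ι 𝕜} (hAJ : ∀ t, (A t)ᵀ * J + J * A t = 0)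
    (hΦ : ∀ t i j, HasDerivAt (fun s => Φ s i j) ((A t * Φ t) i j) t) (t u : 𝕜) :
    (Φ t)ᵀ * J * Φ t = (Φ u)ᵀ * J * Φ u := by
  have hzero t : (A t * Φ t)ᵀ * J * Φ t + (Φ t)ᵀ * J * (A t * Φ t) = 0 :=
    calc (A t * Φ t)ᵀ * J * Φ t + (Φ t)ᵀ * J * (A t * Φ t)
        = (Φ t)ᵀ * ((A t)ᵀ * J + J * A t) * Φ t := by
          simp only [transpose_mul, Matrix.mul_add, Matrix.add_mul, Matrix.mul_assoc]
      _ = 0 := by rw [hAJ, Matrix.mul_zero, Matrix.zero_mul]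
  ext i j
  have hderiv s := hzero s ▸ hasDerivAt_transpose_mul_mul_apply J (hΦ s) i j
  exact is_const_of_deriv_eq_zero (fun s => (hderiv s).differentiableAt)
    (fun s => (hderiv s).deriv) t u

theorem fundamental_matrix_symplectic_general
    (r : ℕ)
    (J : Matrix (Fin r ⊕ Fin r) (Fin r ⊕ Fin r) ℝ)
    (hJ : J = Matrix.fromBlocks 0 1 (-1) 0)
    (M : ℝ → Matrix (Fin r) (Fin r) ℝ)
    (hM : ∀ t, (M t)ᵀ = M t)
    (A : ℝ → Matrix (Fin r ⊕ Fin r) (Fin r ⊕ Fin r) ℝ)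
    (hA : ∀ t, A t = Matrix.fromBlocks 0 1 (-(M t)) 0)
    (Φ : ℝ → Matrix (Fin r ⊕ Fin r) (Fin r ⊕ Fin r) ℝ)
    (hΦ0 : Φ 0 = 1)
    (hΦ : ∀ t i j, HasDerivAt (fun s => Φ s i j) ((A t * Φ t) i j) t) :
    ∀ t : ℝ, (Φ t)ᵀ * J * Φ t = J := by
  have hAJ t : (A t)ᵀ * J + J * A t = 0 := by
    rw [hA, hJ]
    exact transpose_mul_add_mul_eq_zero_of_isSymm (hM t)
  intro t
  simpa [hΦ0] using transpose_mul_mul_eq_of_hasDerivAt J hAJ hΦ t 0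

/-- The fundamental matrix solution of `z' = A(t) z` with
`A(t) = fromBlocks 0 I (-M t) 0`, `M t` symmetric, is symplectic. -/
theorem fundamental_matrix_symplectic
    (r : ℕ) (hr : 1 ≤ r)
    (J : Matrix (Fin r ⊕ Fin r) (Fin r ⊕ Fin r) ℝ)
    (hJ : J = Matrix.fromBlocks 0 1 (-1) 0)
    (M : ℝ → Matrix (Fin r) (Fin r) ℝ)
    (hM : ∀ t, (M t)ᵀ = M t)
    (A : ℝ → Matrix (Fin r ⊕ Fin r) (Fin r ⊕ Fin r) ℝ)
    (hA : ∀ t, A t = Matrix.fromBlocks 0 1 (-(M t)) 0)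
    (Φ : ℝ → Matrix (Fin r ⊕ Fin r) (Fin r ⊕ Fin r) ℝ)
    (hΦ0 : Φ 0 = 1)
    (hΦ : ∀ t i j, HasDerivAt (fun s => Φ s i j) ((A t * Φ t) i j) t) :
    ∀ t : ℝ, (Φ t)ᵀ * J * Φ t = J :=
  fundamental_matrix_symplectic_general r J hJ M hM A hA Φ hΦ0 hΦ
end

section
/- Let r ≥ 1 and let C be any real r×r matrix. Then the exponential of the 2r×2r block matrix N = fromBlocks 0 I C 0 is given by exp N = fromBlocks E O (C*O) E, where E = Σ'_{k≥0} (1/(2k)!) • C^k and O = Σ'_{k≥0} (1/(2k+1)!) • C^k (both series converging in the matrix Banach algebra). Equivalently, formally, exp N = fromBlocks (cosh √C) ((√C)⁻¹ sinh √C) (√C sinh √C) (cosh √C). -/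
/-!
Since `fromBlocks 0 1 C 0 ^ 2 = fromBlocks C 0 0 C`, the even powers of `N = fromBlocks 0 1 C 0`
are `fromBlocks (C ^ k) 0 0 (C ^ k)` and the odd ones are `fromBlocks 0 (C ^ k) (C ^ (k + 1)) 0`.
Splitting the exponential series of `N` into its even and odd terms and summing block by block
gives `E` on the diagonal, `O` in the upper right corner and `C * O` in the lower left one.
The two series in `C` converge because they are dominated by the exponential series of `C`.
-/

open Matrix

theorem HasSum.matrix_fromBlocks {X l m n o R : Type*} [AddCommMonoid R] [TopologicalSpace R]
    {L : SummationFilter X}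
    {A : X → Matrix n l R} {B : X → Matrix n m R} {C : X → Matrix o l R} {D : X → Matrix o m R}
    {a : Matrix n l R} {b : Matrix n m R} {c : Matrix o l R} {d : Matrix o m R}
    (hA : HasSum A a L) (hB : HasSum B b L) (hC : HasSum C c L) (hD : HasSum D d L) :
    HasSum (fun x => fromBlocks (A x) (B x) (C x) (D x)) (fromBlocks a b c d) L := by
  refine Pi.hasSum.2 fun i => Pi.hasSum.2 fun j => ?_
  rcases i with i | i <;> rcases j with j | j
  · exact Pi.hasSum.1 (Pi.hasSum.1 hA i) j
  · exact Pi.hasSum.1 (Pi.hasSum.1 hB i) j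
  · exact Pi.hasSum.1 (Pi.hasSum.1 hC i) j
  · exact Pi.hasSum.1 (Pi.hasSum.1 hD i) j

theorem summable_inv_factorial_smul_pow_of_le {𝔸 : Type*} [NormedRing 𝔸] [NormedAlgebra ℝ 𝔸]
    [CompleteSpace 𝔸] (x : 𝔸) {m : ℕ → ℕ} (hm : ∀ k, k ≤ m k) :
    Summable fun k => ((m k).factorial : ℝ)⁻¹ • x ^ k := by
  refine .of_norm_bounded (NormedSpace.norm_expSeries_summable' (𝕂 := ℝ) x) fun k => ?_
  rw [norm_smul, norm_smul]
  gcongr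
  simp only [norm_inv, RCLike.norm_natCast]
  gcongr
  exact hm k

/-- Summability only depends on the topology, so any submultiplicative matrix norm would do. -/
theorem Matrix.summable_inv_factorial_smul_pow_of_le {n : Type*} [Fintype n] [DecidableEq n]
    (C : Matrix n n ℝ) {m : ℕ → ℕ} (hm : ∀ k, k ≤ m k) :
    Summable fun k => ((m k).factorial : ℝ)⁻¹ • C ^ k := by
  let := Matrix.linftyOpNormedRing (n := n) (α := ℝ)
  let := Matrix.linftyOpNormedAlgebra (n := n) (R := ℝ) (α := ℝ)
  exact _root_.summable_inv_factorial_smul_pow_of_le C hm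

section

variable {n α : Type*} [Fintype n] [DecidableEq n] [Ring α]

theorem Matrix.fromBlocks_zero_one_pow_two_mul (C : Matrix n n α) (k : ℕ) :
    fromBlocks 0 1 C 0 ^ (2 * k) = fromBlocks (C ^ k) 0 0 (C ^ k) := by
  rw [pow_mul, sq, fromBlocks_multiply]
  simpa using fromBlocks_diagonal_pow C C k

theorem Matrix.fromBlocks_zero_one_pow_two_mul_add_one (C : Matrix n n α) (k : ℕ) :
    fromBlocks 0 1 C 0 ^ (2 * k + 1) = fromBlocks 0 (C ^ k) (C ^ (k + 1)) 0 := by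
  rw [pow_succ, fromBlocks_zero_one_pow_two_mul, fromBlocks_multiply]
  simp [pow_succ]

end

theorem exp_fromBlocks_zero_one_C_zero_general
    (r : ℕ)
    (C : Matrix (Fin r) (Fin r) ℝ)
    (E O : Matrix (Fin r) (Fin r) ℝ)
    (hE : E = ∑' k : ℕ, (((2 * k).factorial : ℝ)⁻¹) • C ^ k)
    (hO : O = ∑' k : ℕ, (((2 * k + 1).factorial : ℝ)⁻¹) • C ^ k) :
    NormedSpace.exp (Matrix.fromBlocks 0 1 C 0) =
      Matrix.fromBlocks E O (C * O) E := by
  have hE' : HasSum (fun k => ((2 * k).factorial : ℝ)⁻¹ • C ^ k) E := by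
    rw [hE]
    exact (C.summable_inv_factorial_smul_pow_of_le fun k => by omega).hasSum
  have hO' : HasSum (fun k => ((2 * k + 1).factorial : ℝ)⁻¹ • C ^ k) O := by
    rw [hO]
    exact (C.summable_inv_factorial_smul_pow_of_le fun k => by omega).hasSum
  have hCO : HasSum (fun k => ((2 * k + 1).factorial : ℝ)⁻¹ • C ^ (k + 1)) (C * O) := by
    simpa only [Matrix.mul_smul, ← pow_succ'] using hO'.mul_left C
  have heven : HasSum (fun k => ((2 * k).factorial : ℝ)⁻¹ • fromBlocks 0 1 C 0 ^ (2 * k))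
      (fromBlocks E 0 0 E) := by
    simp only [fromBlocks_zero_one_pow_two_mul, fromBlocks_smul, smul_zero]
    exact hE'.matrix_fromBlocks hasSum_zero hasSum_zero hE'
  have hodd : HasSum (fun k => ((2 * k + 1).factorial : ℝ)⁻¹ • fromBlocks 0 1 C 0 ^ (2 * k + 1))
      (fromBlocks 0 O (C * O) 0) := by
    simp only [fromBlocks_zero_one_pow_two_mul_add_one, fromBlocks_smul, smul_zero]
    exact hasSum_zero.matrix_fromBlocks hO' hCO hasSum_zero
  have hexp := HasSum.even_add_odd
    (f := fun n => (n.factorial : ℝ)⁻¹ • fromBlocks 0 1 C 0 ^ n) heven hodd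
  rw [congrFun (NormedSpace.exp_eq_tsum ℝ), hexp.tsum_eq, fromBlocks_add]
  simp

/-- The exponential of `fromBlocks 0 I C 0` is
`fromBlocks E O (C*O) E` where `E` and `O` are the even and odd series in `C`,
the matrix analogues of `cosh √C` and `(√C)⁻¹ sinh √C`. -/
theorem exp_fromBlocks_zero_one_C_zero
    (r : ℕ) (hr : 1 ≤ r)
    (C : Matrix (Fin r) (Fin r) ℝ)
    (E O : Matrix (Fin r) (Fin r) ℝ)
    (hE : E = ∑' k : ℕ, (((2 * k).factorial : ℝ)⁻¹) • C ^ k)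
    (hO : O = ∑' k : ℕ, (((2 * k + 1).factorial : ℝ)⁻¹) • C ^ k) :
    NormedSpace.exp (Matrix.fromBlocks 0 1 C 0) =
      Matrix.fromBlocks E O (C * O) E :=
  exp_fromBlocks_zero_one_C_zero_general r C E O hE hO
end

section
/- Let ω > 0 and h ∈ ℝ, and set q = sinh(hω)/ω and rₕ = ω · tanh(hω/2). Then the exact flow matrix factorizes into three shears: !![cosh(hω), sinh(hω)/ω; ω·sinh(hω), cosh(hω)] = !![1, 0; rₕ, 1] * !![1, q; 0, 1] * !![1, 0; rₕ, 1]. -/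
/-!
A product of shears `!![1, 0; r, 1] * !![1, q; 0, 1] * !![1, 0; r, 1]` has diagonal `1 + q r`
and lower-left entry `r (2 + q r)`. With `y = hω/2` one has `q rₕ = sinh (2y) tanh y = 2 sinh² y`,
so the diagonal is `cosh (2y)`, and `rₕ (2 + 2 sinh² y) = 2 ω tanh y cosh² y = ω sinh (2y)`.
-/

open Matrix Real

theorem Matrix.lowerShear_mul_upperShear_mul_lowerShear {R : Type*} [CommRing R] (q r : R) :
    !![1, 0; r, 1] * !![1, q; 0, 1] * !![1, 0; r, 1] =
      !![1 + q * r, q; r * (2 + q * r), 1 + q * r] := by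
  rw [mul_fin_two, mul_fin_two]
  ext i j
  fin_cases i <;> fin_cases j <;> simp <;> ring

theorem Real.sinh_two_mul_mul_tanh (y : ℝ) : sinh (2 * y) * tanh y = 2 * sinh y ^ 2 := by
  rw [sinh_two_mul, tanh_eq_sinh_div_cosh]
  field_simp [(cosh_pos y).ne']

theorem Real.cosh_two_mul_eq_one_add_two_sinh_sq (y : ℝ) : cosh (2 * y) = 1 + 2 * sinh y ^ 2 := by
  rw [cosh_two_mul, cosh_sq]
  ring

theorem Real.tanh_mul_two_add_two_sinh_sq (y : ℝ) :
    tanh y * (2 + 2 * sinh y ^ 2) = sinh (2 * y) := by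
  rw [tanh_eq_sinh_div_cosh, sinh_two_mul]
  field_simp [(cosh_pos y).ne']
  linear_combination -sinh y * cosh_sq y

theorem shear_factorization_hyperbolic_general (ω h : ℝ)
    (q rh : ℝ)
    (hq : q = Real.sinh (h * ω) / ω)
    (hr : rh = ω * Real.tanh (h * ω / 2)) :
    !![Real.cosh (h * ω), Real.sinh (h * ω) / ω;
       ω * Real.sinh (h * ω), Real.cosh (h * ω)] =
      !![(1:ℝ), 0; rh, 1] * !![(1:ℝ), q; 0, 1] * !![(1:ℝ), 0; rh, 1] := by
  set y := h * ω / 2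
  have hy : h * ω = 2 * y := by ring
  -- for `ω = 0` the junk value `q = 0` is harmless, since then `h * ω = 0` as well
  have hqr : q * rh = 2 * sinh y ^ 2 := by
    rw [hq, hr, ← mul_assoc, div_mul_cancel_of_imp (fun h0 => by simp [h0]), hy,
      sinh_two_mul_mul_tanh]
  rw [lowerShear_mul_upperShear_mul_lowerShear, hqr, ← hq, hr, mul_assoc,
    tanh_mul_two_add_two_sinh_sq, hy, cosh_two_mul_eq_one_add_two_sinh_sq]

/-- Three-shear factorization of the hyperbolic flow matrix. -/
theorem shear_factorization_hyperbolic (ω h : ℝ) (hω : 0 < ω)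
    (q rh : ℝ)
    (hq : q = Real.sinh (h * ω) / ω)
    (hr : rh = ω * Real.tanh (h * ω / 2)) :
    !![Real.cosh (h * ω), Real.sinh (h * ω) / ω;
       ω * Real.sinh (h * ω), Real.cosh (h * ω)] =
      !![(1:ℝ), 0; rh, 1] * !![(1:ℝ), q; 0, 1] * !![(1:ℝ), 0; rh, 1] :=
  shear_factorization_hyperbolic_general ω h q rh hq hr
end

section
/- Let r ≥ 1, let C be a real symmetric positive definite r×r matrix with positive definite square root √C, let h ∈ ℝ, and define matrix hyperbolic functions by cosh X = (exp X + exp(−X))/2 and sinh X = (exp X − exp(−X))/2. Set S = h • √C, Q = (√C)⁻¹ * sinh S, and R = √C * sinh(S/2) * (cosh(S/2))⁻¹ (note cosh(S/2) is positive definite, hence invertible). Then fromBlocks (cosh S) Q (√C * sinh S) (cosh S) = (fromBlocks I 0 R I) * (fromBlocks I Q 0 I) * (fromBlocks I 0 R I). -/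
/-! With `c = cosh (S/2)`, `s = sinh (S/2)` the double-angle formulas give `cosh S = 1 + 2 s²`,
`sinh S = 2 s c`, and `c² = 1 + s²`. Multiplying out the three shears, the claim reduces to
`Q R = R Q = 2 s²` and `R (2 + 2 s²) = √C · 2 s c`, which are commutative-ring identities as soon
as `√C`, `√C⁻¹`, `c`, `c⁻¹` and `s` commute pairwise. They do: all of them lie in the bicommutant
of `√C`, and the bicommutant of a commuting set is commutative. -/

open Matrix

/-- Matrix hyperbolic cosine: `cosh X = (exp X + exp (-X))/2`. -/
noncomputable def mcosh {n : Type*} [Fintype n] [DecidableEq n]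
    (X : Matrix n n ℝ) : Matrix n n ℝ :=
  (1 / 2 : ℝ) • (NormedSpace.exp X + NormedSpace.exp (-X))

/-- Matrix hyperbolic sine: `sinh X = (exp X - exp (-X))/2`. -/
noncomputable def msinh {n : Type*} [Fintype n] [DecidableEq n]
    (X : Matrix n n ℝ) : Matrix n n ℝ :=
  (1 / 2 : ℝ) • (NormedSpace.exp X - NormedSpace.exp (-X))

section Hyperbolic

variable {n : Type*} [Fintype n] [DecidableEq n]

theorem Commute.mcosh_right {A X : Matrix n n ℝ} (h : Commute A X) : Commute A (mcosh X) :=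
  (h.exp_right.add_right h.neg_right.exp_right).smul_right _

theorem Commute.msinh_right {A X : Matrix n n ℝ} (h : Commute A X) : Commute A (msinh X) :=
  (h.exp_right.sub_right h.neg_right.exp_right).smul_right _

theorem Matrix.exp_mul_exp_neg (X : Matrix n n ℝ) :
    NormedSpace.exp X * NormedSpace.exp (-X) = 1 := by
  rw [← Matrix.exp_add_of_commute _ _ (Commute.refl X).neg_right, add_neg_cancel,
    NormedSpace.exp_zero]

theorem Matrix.exp_neg_mul_exp (X : Matrix n n ℝ) :
    NormedSpace.exp (-X) * NormedSpace.exp X = 1 := by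
  simpa using exp_mul_exp_neg (-X)

theorem Matrix.exp_two_smul (X : Matrix n n ℝ) :
    NormedSpace.exp ((2 : ℝ) • X) = NormedSpace.exp X * NormedSpace.exp X := by
  rw [← Matrix.exp_add_of_commute _ _ (Commute.refl X), two_smul]

theorem mcosh_mul_self (X : Matrix n n ℝ) : mcosh X * mcosh X = 1 + msinh X * msinh X := by
  simp only [mcosh, msinh, smul_mul_smul_comm, mul_add, add_mul, mul_sub, sub_mul,
    exp_mul_exp_neg, exp_neg_mul_exp]
  module

theorem mcosh_two_smul (X : Matrix n n ℝ) :
    mcosh ((2 : ℝ) • X) = 1 + 2 * (msinh X * msinh X) := by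
  have h2 : -((2 : ℝ) • X) = (2 : ℝ) • -X := (smul_neg _ _).symm
  simp only [mcosh, msinh, h2, exp_two_smul, two_mul, smul_mul_smul_comm, mul_sub, sub_mul,
    exp_mul_exp_neg, exp_neg_mul_exp]
  module

theorem msinh_two_smul (X : Matrix n n ℝ) :
    msinh ((2 : ℝ) • X) = 2 * (msinh X * mcosh X) := by
  have h2 : -((2 : ℝ) • X) = (2 : ℝ) • -X := (smul_neg _ _).symm
  simp only [mcosh, msinh, h2, exp_two_smul, two_mul, smul_mul_smul_comm, mul_add, sub_mul,
    exp_mul_exp_neg, exp_neg_mul_exp]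
  module

theorem Matrix.IsHermitian.posDef_exp {X : Matrix n n ℝ} (hX : X.IsHermitian) :
    (NormedSpace.exp X).PosDef := by
  have hhalf : (NormedSpace.exp ((1 / 2 : ℝ) • X)).IsHermitian :=
    (hX.smul (IsSelfAdjoint.all _)).exp
  have hsq : NormedSpace.exp X =
      (NormedSpace.exp ((1 / 2 : ℝ) • X))ᴴ * NormedSpace.exp ((1 / 2 : ℝ) • X) := by
    rw [hhalf.eq, ← exp_two_smul, smul_smul]
    norm_num
  rw [hsq]
  exact .conjTranspose_mul_self _ (mulVec_injective_of_isUnit (isUnit_exp _))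

theorem Matrix.IsHermitian.posDef_mcosh {X : Matrix n n ℝ} (hX : X.IsHermitian) :
    (mcosh X).PosDef :=
  (hX.posDef_exp.add hX.neg.posDef_exp).smul (by norm_num)

end Hyperbolic

theorem Commute.nonsing_inv_right {n α : Type*} [Fintype n] [DecidableEq n] [CommRing α]
    {A B : Matrix n n α} (h : Commute A B) : Commute A B⁻¹ := by
  by_cases hB : IsUnit B
  · obtain ⟨u, rfl⟩ := hB
    simpa only [coe_units_inv] using h.units_inv_right
  · rw [nonsing_inv_apply_not_isUnit _ ((isUnit_iff_isUnit_det B).not.mp hB)]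
    exact .zero_right A

theorem half_angle_shear_identities {K : Type*} [CommRing K] {σ σ' c c' s : K}
    (hσ : σ' * σ = 1) (hc : c * c' = 1) (hcs : c * c = 1 + s * s) :
    1 + σ' * (2 * (s * c)) * (σ * s * c') = 1 + 2 * (s * s) ∧
      σ * s * c' + (σ * s * c' * (σ' * (2 * (s * c))) + 1) * (σ * s * c') = σ * (2 * (s * c)) ∧
      σ * s * c' * (σ' * (2 * (s * c))) + 1 = 1 + 2 * (s * s) := by
  refine ⟨?_, ?_, ?_⟩
  · linear_combination (2 * s * s * c * c') * hσ + 2 * s * s * hc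
  · linear_combination (2 * σ * s ^ 3 * c * c' ^ 2) * hσ + (2 * σ * s ^ 3 * c') * hc
      - (2 * σ * s * c') * hcs + (2 * σ * s * c) * hc
  · linear_combination (2 * s * s * c * c') * hσ + 2 * s * s * hc

open scoped IsMulCommutative in
theorem half_angle_shear_identities_of_commute {A : Type*} [Ring A] {σ σ' c c' s : A}
    (hσ : σ' * σ = 1) (hc : c * c' = 1) (hcs : c * c = 1 + s * s)
    (hcomm : ∀ x ∈ ({σ, σ', c, c', s} : Set A), ∀ y ∈ ({σ, σ', c, c', s} : Set A),
      x * y = y * x) :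
    1 + σ' * (2 * (s * c)) * (σ * s * c') = 1 + 2 * (s * s) ∧
      σ * s * c' + (σ * s * c' * (σ' * (2 * (s * c))) + 1) * (σ * s * c') = σ * (2 * (s * c)) ∧
      σ * s * c' * (σ' * (2 * (s * c))) + 1 = 1 + 2 * (s * s) := by
  have := Subring.isMulCommutative_closure hcomm
  let K := Subring.closure ({σ, σ', c, c', s} : Set A)
  have mem : ∀ x ∈ ({σ, σ', c, c', s} : Set A), x ∈ K := fun x hx => Subring.subset_closure hx
  obtain ⟨h1, h2, h3⟩ := half_angle_shear_identities (K := K) (σ := ⟨σ, mem σ (by simp)⟩)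
    (σ' := ⟨σ', mem σ' (by simp)⟩) (c := ⟨c, mem c (by simp)⟩) (c' := ⟨c', mem c' (by simp)⟩)
    (s := ⟨s, mem s (by simp)⟩) (Subtype.ext hσ) (Subtype.ext hc) (Subtype.ext hcs)
  exact ⟨congrArg Subtype.val h1, congrArg Subtype.val h2, congrArg Subtype.val h3⟩

theorem Matrix.fromBlocks_shear_mul_shear_mul_shear {n α : Type*} [Fintype n] [DecidableEq n]
    [Ring α] (Q R : Matrix n n α) :
    fromBlocks 1 0 R 1 * fromBlocks 1 Q 0 1 * fromBlocks 1 0 R 1 =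
      fromBlocks (1 + Q * R) Q (R + (R * Q + 1) * R) (R * Q + 1) := by
  simp [fromBlocks_multiply]

theorem shear_factorization_matrix_general
    (r : ℕ)
    (sqrtC : Matrix (Fin r) (Fin r) ℝ)
    (hsqrt : sqrtC.PosDef)
    (h : ℝ)
    (S : Matrix (Fin r) (Fin r) ℝ) (hS : S = h • sqrtC)
    (Q R : Matrix (Fin r) (Fin r) ℝ)
    (hQ : Q = sqrtC⁻¹ * msinh S)
    (hR : R = sqrtC * msinh ((1/2 : ℝ) • S) * (mcosh ((1/2 : ℝ) • S))⁻¹) :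
    Matrix.fromBlocks (mcosh S) Q (sqrtC * msinh S) (mcosh S) =
      Matrix.fromBlocks 1 0 R 1 * Matrix.fromBlocks 1 Q 0 1 *
        Matrix.fromBlocks 1 0 R 1 := by
  subst hQ hR
  set T := (1/2 : ℝ) • S
  have hST : S = (2 : ℝ) • T := by rw [smul_smul]; norm_num
  have hT : T = ((1/2 : ℝ) * h) • sqrtC := by simp only [T, hS, smul_smul]
  have hcosh : IsUnit (mcosh T).det := (isUnit_iff_isUnit_det _).mp
    (hT ▸ hsqrt.isHermitian.smul (IsSelfAdjoint.all _)).posDef_mcosh.isUnit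
  have hbicomm : ({sqrtC, sqrtC⁻¹, mcosh T, (mcosh T)⁻¹, msinh T} : Set _) ⊆
      Set.centralizer (Set.centralizer {sqrtC}) := by
    intro x hx
    refine Set.mem_centralizer_iff.mpr fun y hy => ?_
    have hyσ : Commute y sqrtC := (Set.mem_centralizer_iff.mp hy sqrtC rfl).symm
    have hyT : Commute y T := hT ▸ hyσ.smul_right _
    rcases hx with rfl | rfl | rfl | rfl | rfl
    exacts [hyσ.eq, hyσ.nonsing_inv_right.eq, hyT.mcosh_right.eq,
      hyT.mcosh_right.nonsing_inv_right.eq, hyT.msinh_right.eq]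
  obtain ⟨h11, h21, h22⟩ := half_angle_shear_identities_of_commute
    (nonsing_inv_mul _ ((isUnit_iff_isUnit_det _).mp hsqrt.isUnit)) (mul_nonsing_inv _ hcosh)
    (mcosh_mul_self T) fun x hx y hy =>
      Set.centralizer_centralizer_comm_of_comm (by simp) x (hbicomm hx) y (hbicomm hy)
  rw [Matrix.fromBlocks_shear_mul_shear_mul_shear, hST, mcosh_two_smul, msinh_two_smul, h11, h21,
    h22]

/-- Three-shear factorization of the exact flow
`Φ(h) = exp (h • fromBlocks 0 I C 0)` for `C` symmetric positive definite,
with `Q = sinh(h√C)/√C` and `R = √C tanh(h√C/2)`. -/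
theorem shear_factorization_matrix
    (r : ℕ) (hr : 1 ≤ r)
    (C sqrtC : Matrix (Fin r) (Fin r) ℝ)
    (hC : C.PosDef) (hsqrt : sqrtC.PosDef) (hsq : sqrtC * sqrtC = C)
    (h : ℝ)
    (S : Matrix (Fin r) (Fin r) ℝ) (hS : S = h • sqrtC)
    (Q R : Matrix (Fin r) (Fin r) ℝ)
    (hQ : Q = sqrtC⁻¹ * msinh S)
    (hR : R = sqrtC * msinh ((1/2 : ℝ) • S) * (mcosh ((1/2 : ℝ) • S))⁻¹) :
    Matrix.fromBlocks (mcosh S) Q (sqrtC * msinh S) (mcosh S) =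
      Matrix.fromBlocks 1 0 R 1 * Matrix.fromBlocks 1 Q 0 1 *
        Matrix.fromBlocks 1 0 R 1 :=
  shear_factorization_matrix_general r sqrtC hsqrt h S hS Q R hQ hR
end
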